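/- The Jaccard dissimilarity 1 − J(A,B) = 1 − |A∩B|/|A∪B| satisfies the triangle inequality: for finite sets A, B, C (with pairwise unions nonempty), 1 − J(A,C) ≤ (1 − J(A,B)) + (1 − J(B,C)). -/
import Mathlib
open scoped symmDiff

lemma jaccard_aux (a b c p q r : ℝ) (hp : 0 ≤ p) (hq : 0 ≤ q)
    (hac : 0 ≤ a + c)
    (h1 : 0 < a + b + p) (h2 : 0 < b + c + q) (h3 : 0 < a + c + r)
    (htri : r ≤ p + q) (hb1 : b ≤ a + p) (hb2 : b ≤ c + q) :
    2 * r / (a + c + r) ≤ 2 * p / (a + b + p) + 2 * q / (b + c + q) := by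
  have hD : 0 < a + c + (p + q) := by linarith
  have step1 : 2 * r / (a + c + r) ≤ 2 * (p + q) / (a + c + (p + q)) := by
    rw [div_le_div_iff₀ h3 hD]
    nlinarith [mul_le_mul_of_nonneg_right htri hac]
  have e : 2 * (p + q) / (a + c + (p + q))
      = 2 * p / (a + c + (p + q)) + 2 * q / (a + c + (p + q)) := by ring
  have s2 : 2 * p / (a + c + (p + q)) ≤ 2 * p / (a + b + p) := by
    apply div_le_div_of_nonneg_left (by linarith) h1 (by linarith)
  have s3 : 2 * q / (a + c + (p + q)) ≤ 2 * q / (b + c + q) := by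
    apply div_le_div_of_nonneg_left (by linarith) h2 (by linarith)
  linarith [step1, e ▸ (add_le_add s2 s3 : _)]

lemma card_symmDiff_add_card_inter {α : Type*} [DecidableEq α] (X Y : Finset α) :
    (X ∆ Y).card + (X ∩ Y).card = (X ∪ Y).card := by
  have h := congrArg Finset.card (symmDiff_sup_inf X Y)
  rw [Finset.sup_eq_union, Finset.inf_eq_inter] at h
  rw [Finset.card_union_of_disjoint (by simpa using disjoint_symmDiff_inf X Y)] at h
  exact h

lemma jaccard_one_sub {α : Type*} [DecidableEq α] (X Y : Finset α)
    (h : (X ∪ Y).Nonempty) :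
    1 - ((X ∩ Y).card : ℝ) / ((X ∪ Y).card : ℝ)
      = 2 * ((X ∆ Y).card : ℝ) / ((X.card : ℝ) + (Y.card : ℝ) + ((X ∆ Y).card : ℝ)) := by
  have hu : (0:ℝ) < ((X ∪ Y).card : ℝ) := by exact_mod_cast Finset.card_pos.mpr h
  have k : ((X ∆ Y).card : ℝ) + ((X ∩ Y).card : ℝ) = ((X ∪ Y).card : ℝ) := by
    exact_mod_cast card_symmDiff_add_card_inter X Y
  have m : ((X ∪ Y).card : ℝ) + ((X ∩ Y).card : ℝ) = (X.card : ℝ) + (Y.card : ℝ) := by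
    exact_mod_cast Finset.card_union_add_card_inter X Y
  have h2u : (X.card : ℝ) + (Y.card : ℝ) + ((X ∆ Y).card : ℝ)
      = 2 * ((X ∪ Y).card : ℝ) := by linarith
  have hi : ((X ∩ Y).card : ℝ) = ((X ∪ Y).card : ℝ) - ((X ∆ Y).card : ℝ) := by linarith
  rw [h2u, hi]
  field_simp
  ring

/-- The Jaccard dissimilarity `1 - |X ∩ Y|/|X ∪ Y|` satisfies the triangle
inequality. -/
theorem jaccard_dissimilarity_triangle {α : Type*} [DecidableEq α]
    (A B C : Finset α) (hA : A.Nonempty) (hB : B.Nonempty) (hC : C.Nonempty) :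
    1 - ((A ∩ C).card : ℝ) / ((A ∪ C).card : ℝ)
      ≤ (1 - ((A ∩ B).card : ℝ) / ((A ∪ B).card : ℝ))
        + (1 - ((B ∩ C).card : ℝ) / ((B ∪ C).card : ℝ)) := by
  have hu1 : (0:ℝ) < ((A ∪ B).card : ℝ) := by
    exact_mod_cast Finset.card_pos.mpr (hA.mono Finset.subset_union_left)
  have hu2 : (0:ℝ) < ((B ∪ C).card : ℝ) := by
    exact_mod_cast Finset.card_pos.mpr (hB.mono Finset.subset_union_left)
  have hu3 : (0:ℝ) < ((A ∪ C).card : ℝ) := by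
    exact_mod_cast Finset.card_pos.mpr (hA.mono Finset.subset_union_left)
  have k1 : ((A ∆ B).card : ℝ) + ((A ∩ B).card : ℝ) = ((A ∪ B).card : ℝ) := by
    exact_mod_cast card_symmDiff_add_card_inter A B
  have k2 : ((B ∆ C).card : ℝ) + ((B ∩ C).card : ℝ) = ((B ∪ C).card : ℝ) := by
    exact_mod_cast card_symmDiff_add_card_inter B C
  have k3 : ((A ∆ C).card : ℝ) + ((A ∩ C).card : ℝ) = ((A ∪ C).card : ℝ) := by
    exact_mod_cast card_symmDiff_add_card_inter A C
  have m1 : ((A ∪ B).card : ℝ) + ((A ∩ B).card : ℝ) = (A.card : ℝ) + (B.card : ℝ) := by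
    exact_mod_cast Finset.card_union_add_card_inter A B
  have m2 : ((B ∪ C).card : ℝ) + ((B ∩ C).card : ℝ) = (B.card : ℝ) + (C.card : ℝ) := by
    exact_mod_cast Finset.card_union_add_card_inter B C
  have m3 : ((A ∪ C).card : ℝ) + ((A ∩ C).card : ℝ) = (A.card : ℝ) + (C.card : ℝ) := by
    exact_mod_cast Finset.card_union_add_card_inter A C
  have htri : ((A ∆ C).card : ℝ) ≤ ((A ∆ B).card : ℝ) + ((B ∆ C).card : ℝ) := by
    have : (A ∆ C).card ≤ (A ∆ B).card + (B ∆ C).card :=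
      le_trans (Finset.card_le_card
        (by simpa [Finset.sup_eq_union] using symmDiff_triangle A B C))
        (Finset.card_union_le _ _)
    exact_mod_cast this
  have hbu1 : (B.card : ℝ) ≤ ((A ∪ B).card : ℝ) := by
    exact_mod_cast Finset.card_le_card (Finset.subset_union_right : B ⊆ A ∪ B)
  have hbu2 : (B.card : ℝ) ≤ ((B ∪ C).card : ℝ) := by
    exact_mod_cast Finset.card_le_card (Finset.subset_union_left : B ⊆ B ∪ C)
  have hp : (0:ℝ) ≤ ((A ∆ B).card : ℝ) := by positivity
  have hq : (0:ℝ) ≤ ((B ∆ C).card : ℝ) := by positivity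
  have hac : (0:ℝ) ≤ (A.card : ℝ) + (C.card : ℝ) := by positivity
  rw [jaccard_one_sub A B (hA.mono Finset.subset_union_left),
      jaccard_one_sub B C (hB.mono Finset.subset_union_left),
      jaccard_one_sub A C (hA.mono Finset.subset_union_left)]
  exact jaccard_aux _ _ _ _ _ _ hp hq hac (by linarith) (by linarith) (by linarith)
    htri (by linarith) (by linarith)
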